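/- Let T be a normed height tree. Then the canonical ultrametric d on the boundary ∂T, defined by d(x,y) = max{‖z‖ : z ∈ (x ∪ y) ∩ suc(x ∧ y)} for distinct branches x,y and d(x,x)=0, generates the canonical topology on ∂T, i.e., the metric topology of d coincides with the topology generated by the subbase {⇑x : x ∈ T, ℏ(x) ≠ −1} ∪ {∂T \ ⇑x : x ∈ T}. -/

import Mathlib

open Set

/-- The linearly ordered class of heights: `⊥` plays the role of `−1`, ordinals are
coerced, and `⊤` plays the role of `∞`. -/
abbrev Hgt : Type 1 := WithBot (WithTop Ordinal.{0})

/-- A height tree: a tree (a partial order with least element whose lower sets are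
finite chains) with a height function satisfying the axioms of Definition 2.2. -/
structure HeightTree where
  /-- the underlying set of vertices -/
  T : Type
  [po : PartialOrder T]
  [bot : OrderBot T]
  /-- lower sets are finite -/
  lower_finite : ∀ x : T, (Set.Iic x).Finite
  /-- lower sets are chains -/
  lower_chain : ∀ x : T, IsChain (· ≤ ·) (Set.Iic x)
  /-- the height function -/
  h : T → Hgt
  /-- all non-`⊥`, non-`⊤` heights are countable ordinals -/
  h_countable : ∀ x : T, ∀ α : Ordinal.{0},
    h x = ((α : WithTop Ordinal.{0}) : Hgt) → α.card ≤ Cardinal.aleph0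
  /-- each vertex has exactly one successor of height `−1` (its central point) -/
  center : ∀ x : T, ∃! y : T, x ⋖ y ∧ h y = ⊥
  /-- if `h x ∈ {−1, 0}` then the central point is the only successor of `x` -/
  succ_single : ∀ x : T, h x ≤ (0 : Hgt) → ∀ y z : T, x ⋖ y → x ⋖ z → y = z
  /-- if `h x > 0` then `x` has countably infinitely many successors -/
  succ_ctble : ∀ x : T, (0 : Hgt) < h x →
    {y : T | x ⋖ y}.Countable ∧ {y : T | x ⋖ y}.Infinite
  /-- if `h x = ∞` then all but finitely many successors of `x` have height `∞` -/
  succ_top : ∀ x : T, h x = (⊤ : Hgt) → {y : T | x ⋖ y ∧ h y ≠ (⊤ : Hgt)}.Finite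
  /-- if `0 < h x < ∞` then `h x = lim_{y ∈ suc x} (h y + 1)`: it is an upper bound … -/
  succ_le : ∀ x : T, (0 : Hgt) < h x → h x < (⊤ : Hgt) → ∀ y : T, x ⋖ y → h y + 1 ≤ h x
  /-- … and for every `β < h x` all but finitely many successors `y` have `β < h y + 1` -/
  succ_lim : ∀ x : T, (0 : Hgt) < h x → h x < (⊤ : Hgt) →
    ∀ β : Hgt, β < h x → {y : T | x ⋖ y ∧ ¬ β < h y + 1}.Finite

attribute [instance] HeightTree.po HeightTree.bot

/-- The boundary of a tree: the set of its branches (maximal chains). -/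
def HeightTree.Branch (t : HeightTree) : Type :=
  {b : Set t.T // IsMaxChain (· ≤ ·) b}

/-- The set `⇑x` of branches containing a vertex `x`. -/
def HeightTree.up (t : HeightTree) (x : t.T) : Set t.Branch := {b | x ∈ b.1}

/-- The canonical topology on the boundary of a height tree, generated by the subbase
`{⇑x : h x ≠ −1} ∪ {∂T \ ⇑x : x ∈ T}`. -/
def HeightTree.canonTop (t : HeightTree) : TopologicalSpace t.Branch :=
  TopologicalSpace.generateFrom
    ({S | ∃ x : t.T, t.h x ≠ ⊥ ∧ S = t.up x} ∪ {S | ∃ x : t.T, S = (t.up x)ᶜ})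

/-- A norm on a height tree. -/
structure IsTreeNorm (t : HeightTree) (n : t.T → ℝ) : Prop where
  mono : ∀ x y : t.T, x ≤ y → n y ≤ n x
  nonneg : ∀ x : t.T, 0 ≤ n x
  zero_iff : ∀ x : t.T, n x = 0 ↔ t.h x = ⊥
  finite : ∀ ε : ℝ, 0 < ε → {x : t.T | ε ≤ n x}.Finite

/-- `d` is the canonical distance on the boundary determined by the norm `n`:
`d x x = 0` and, for distinct branches `x ≠ y` with meet `m = max (x ∩ y)`,
`d x y = max {‖z‖ : z ∈ (x ∪ y) ∩ suc m}`. -/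
def IsCanonDist (t : HeightTree) (n : t.T → ℝ) (d : t.Branch → t.Branch → ℝ) : Prop :=
  (∀ b : t.Branch, d b b = 0) ∧
  ∀ x y : t.Branch, x ≠ y → ∀ m : t.T, IsGreatest (x.1 ∩ y.1) m →
    IsGreatest (n '' ((x.1 ∪ y.1) ∩ {z : t.T | m ⋖ z})) (d x y)


/-!
Both topologies are described by agreement of branches on finitely many vertices. Since `d x y`
is the norm of a cover of the meet of `x` and `y`, it is `< ε` as soon as `x` and `y` contain the
same vertices among the finitely many of norm `≥ ε`. Conversely, since norms decrease along
branches, `‖v‖ ≤ d x y` whenever `v ∈ x \ y`. So `⇑v` contains the `‖v‖`-ball around each of its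
points, and `∂T \ ⇑w` contains the `max ‖c‖ ‖u‖`-ball around `x ∉ ⇑w`, where `c ∈ x` and `u ≤ w`
are distinct covers of the last vertex of `x` below `w`; at most one of them is the central
point, so this radius is positive.
-/

open Topology

theorem Set.Finite.exists_isGreatest_of_isChain {α : Type*} [Preorder α] {s : Set α}
    (hs : s.Finite) (hne : s.Nonempty) (hc : IsChain (· ≤ ·) s) : ∃ m, IsGreatest s m := by
  obtain ⟨m, hm⟩ := hs.exists_maximal hne
  refine ⟨m, hm.prop, fun a ha => ?_⟩
  rcases hc.total ha hm.prop with h | h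
  · exact h
  · exact hm.le_of_ge ha h

def IsBallOpen {X : Type*} (d : X → X → ℝ) (S : Set X) : Prop :=
  ∀ x ∈ S, ∃ ε > 0, {y | d x y < ε} ⊆ S

theorem TopologicalSpace.GenerateOpen.isBallOpen {X : Type*} {d : X → X → ℝ}
    {g : Set (Set X)} (hg : ∀ s ∈ g, IsBallOpen d s) {S : Set X}
    (hS : TopologicalSpace.GenerateOpen g S) : IsBallOpen d S := by
  induction hS with
  | basic s hs => exact hg s hs
  | univ => exact fun _ _ => ⟨1, one_pos, subset_univ _⟩
  | inter U V _ _ ihU ihV =>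
    intro x ⟨hxU, hxV⟩
    obtain ⟨ε₁, hε₁, hU⟩ := ihU x hxU
    obtain ⟨ε₂, hε₂, hV⟩ := ihV x hxV
    exact ⟨min ε₁ ε₂, lt_min hε₁ hε₂, fun y (hy : d x y < min ε₁ ε₂) =>
      ⟨hU (lt_of_lt_of_le hy (min_le_left _ _)), hV (lt_of_lt_of_le hy (min_le_right _ _))⟩⟩
  | sUnion K _ ih =>
    rintro x ⟨U, hUK, hxU⟩
    obtain ⟨ε, hε, hU⟩ := ih U hUK x hxU
    exact ⟨ε, hε, hU.trans (subset_sUnion_of_mem hUK)⟩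

namespace HeightTree

variable {t : HeightTree}

theorem exists_covBy_le_of_lt {p w : t.T} (h : p < w) : ∃ u, p ⋖ u ∧ u ≤ w := by
  obtain ⟨u, hu⟩ :=
    ((t.lower_finite w).subset Ioc_subset_Iic_self).exists_minimal ⟨w, h, le_rfl⟩
  refine ⟨u, ⟨hu.prop.1, fun s hps hsu => ?_⟩, hu.prop.2⟩
  exact hsu.not_ge (hu.le_of_le ⟨hps, hsu.le.trans hu.prop.2⟩ hsu.le)

namespace Branch

variable (b : t.Branch)

theorem mem_of_isChain_insert {a : t.T} (h : IsChain (· ≤ ·) (insert a b.1)) : a ∈ b.1 := by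
  rw [b.2.2 h (subset_insert a b.1)]
  exact mem_insert a b.1

theorem mem_of_le {u v : t.T} (huv : u ≤ v) (hv : v ∈ b.1) : u ∈ b.1 := by
  refine b.mem_of_isChain_insert (b.2.1.insert fun s hs hus => ?_)
  rcases b.2.1.total hs hv with hsv | hvs
  · exact t.lower_chain v huv hsv hus
  · exact Or.inl (huv.trans hvs)

theorem exists_covBy_mem {v : t.T} (hv : v ∈ b.1) : ∃ c ∈ b.1, v ⋖ c := by
  obtain ⟨u, hu, hvu⟩ : ∃ u ∈ b.1, v < u := by
    by_contra! hle
    have hb_le : ∀ s ∈ b.1, s ≤ v := fun s hs =>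
      (b.2.1.total hs hv).elim id fun hvs => (eq_of_le_of_not_lt hvs (hle s hs)).ge
    obtain ⟨w, ⟨hvw, -⟩, -⟩ := t.center v
    have hw : w ∈ b.1 := b.mem_of_isChain_insert
      (b.2.1.insert fun s hs _ => Or.inr ((hb_le s hs).trans hvw.le))
    exact (hb_le w hw).not_gt hvw.lt
  obtain ⟨c, hvc, hcu⟩ := exists_covBy_le_of_lt hvu
  exact ⟨c, b.mem_of_le hcu hu, hvc⟩

theorem covBy_unique {v c c' : t.T} (hc : c ∈ b.1) (hc' : c' ∈ b.1) (h : v ⋖ c)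
    (h' : v ⋖ c') : c = c' := by
  rcases b.2.1.total hc hc' with hle | hle
  · exact hle.eq_of_not_lt (h'.2 h.1)
  · exact (hle.eq_of_not_lt (h.2 h'.1)).symm

theorem exists_covBy_notMem {w : t.T} (hw : w ∉ b.1) :
    ∃ p ∈ b.1, ∃ u ∉ b.1, p ⋖ u ∧ u ≤ w := by
  obtain ⟨p, ⟨hpb, hpw⟩, hp⟩ :=
    ((t.lower_finite w).subset inter_subset_right).exists_isGreatest_of_isChain
      ⟨⊥, b.2.bot_mem, bot_le⟩ (b.2.1.mono inter_subset_left)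
  obtain ⟨u, hpu, huw⟩ :=
    exists_covBy_le_of_lt ((mem_Iic.mp hpw).lt_of_ne (by rintro rfl; exact hw hpb))
  exact ⟨p, hpb, u, fun hub => hpu.lt.not_ge (hp ⟨hub, huw⟩), hpu, huw⟩

theorem lt_of_mem_inter_of_notMem {x y : t.Branch} {u v : t.T} (hu : u ∈ x.1 ∩ y.1)
    (hvx : v ∈ x.1) (hvy : v ∉ y.1) : u < v := by
  refine ((x.2.1.total hu.1 hvx).resolve_right fun hvu => hvy (y.mem_of_le hvu hu.2)).lt_of_ne ?_
  rintro rfl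
  exact hvy hu.2

end Branch

theorem exists_isGreatest_inter {x y : t.Branch} (hne : x ≠ y) :
    ∃ m, IsGreatest (x.1 ∩ y.1) m := by
  obtain ⟨v, hvx, hvy⟩ := not_subset.mp fun hxy => hne (Subtype.ext (x.2.2 y.2.1 hxy))
  exact ((t.lower_finite v).subset fun u hu =>
    (Branch.lt_of_mem_inter_of_notMem hu hvx hvy).le).exists_isGreatest_of_isChain
      ⟨⊥, x.2.bot_mem, y.2.bot_mem⟩ (x.2.1.mono inter_subset_left)

theorem isOpen_up {v : t.T} (hv : t.h v ≠ ⊥) : IsOpen[t.canonTop] (t.up v) :=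
  .basic _ (Or.inl ⟨v, hv, rfl⟩)

theorem isOpen_compl_up (v : t.T) : IsOpen[t.canonTop] (t.up v)ᶜ :=
  .basic _ (Or.inr ⟨v, rfl⟩)

theorem isOpen_setOf_forall_mem_iff {F : Set t.T} (hF : F.Finite) (hFh : ∀ z ∈ F, t.h z ≠ ⊥)
    (x : t.Branch) : IsOpen[t.canonTop] {y : t.Branch | ∀ z ∈ F, z ∈ y.1 ↔ z ∈ x.1} := by
  let := t.canonTop
  have hinter : {y : t.Branch | ∀ z ∈ F, z ∈ y.1 ↔ z ∈ x.1} =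
      ⋂ z ∈ F, {y : t.Branch | z ∈ y.1 ↔ z ∈ x.1} := by
    ext
    simp
  rw [hinter]
  refine hF.isOpen_biInter fun z hz => ?_
  by_cases hzx : z ∈ x.1
  · simp only [hzx, iff_true]
    exact isOpen_up (hFh z hz)
  · simp only [hzx, iff_false]
    exact isOpen_compl_up z

end HeightTree

open HeightTree

section Norm

variable {t : HeightTree} {n : t.T → ℝ} {d : t.Branch → t.Branch → ℝ}

namespace IsTreeNorm

theorem pos (hn : IsTreeNorm t n) {v : t.T} (hv : t.h v ≠ ⊥) : 0 < n v :=
  (hn.nonneg v).lt_of_ne fun h => hv ((hn.zero_iff v).mp h.symm)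

theorem h_ne_bot (hn : IsTreeNorm t n) {v : t.T} (hv : 0 < n v) : t.h v ≠ ⊥ :=
  fun h => hv.ne' ((hn.zero_iff v).mpr h)

theorem max_pos_of_covBy (hn : IsTreeNorm t n) {p c u : t.T} (hc : p ⋖ c) (hu : p ⋖ u)
    (hne : c ≠ u) : 0 < max (n c) (n u) := by
  by_contra! hle
  have hc0 : n c = 0 := le_antisymm ((le_max_left _ _).trans hle) (hn.nonneg c)
  have hu0 : n u = 0 := le_antisymm ((le_max_right _ _).trans hle) (hn.nonneg u)
  obtain ⟨_, -, huniq⟩ := t.center p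
  exact hne ((huniq c ⟨hc, (hn.zero_iff c).mp hc0⟩).trans
    (huniq u ⟨hu, (hn.zero_iff u).mp hu0⟩).symm)

end IsTreeNorm

namespace IsCanonDist

theorem symm (hd : IsCanonDist t n d) (x y : t.Branch) : d x y = d y x := by
  rcases eq_or_ne x y with rfl | hne
  · rfl
  obtain ⟨m, hm⟩ := exists_isGreatest_inter hne
  have hyx := hd.2 y x hne.symm m (by rwa [inter_comm])
  rw [union_comm] at hyx
  exact (hd.2 x y hne m hm).unique hyx

theorem norm_le_of_mem_of_notMem (hn : IsTreeNorm t n) (hd : IsCanonDist t n d)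
    {x y : t.Branch} {v : t.T} (hvx : v ∈ x.1) (hvy : v ∉ y.1) : n v ≤ d x y := by
  have hne : x ≠ y := by rintro rfl; exact hvy hvx
  obtain ⟨m, hm⟩ := exists_isGreatest_inter hne
  obtain ⟨c, hmc, hcv⟩ := exists_covBy_le_of_lt (Branch.lt_of_mem_inter_of_notMem hm.1 hvx hvy)
  exact (hn.mono c v hcv).trans
    ((hd.2 x y hne m hm).2 ⟨c, ⟨Or.inl (x.mem_of_le hcv hvx), hmc⟩, rfl⟩)

theorem lt_of_forall_mem_iff (hd : IsCanonDist t n d) {ε : ℝ} (hε : 0 < ε) {x y : t.Branch}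
    (hxy : ∀ z, ε ≤ n z → (z ∈ y.1 ↔ z ∈ x.1)) : d x y < ε := by
  rcases eq_or_ne x y with rfl | hne
  · exact (hd.1 x).symm ▸ hε
  obtain ⟨m, hm⟩ := exists_isGreatest_inter hne
  obtain ⟨w, ⟨hw, hmw⟩, hwd⟩ := (hd.2 x y hne m hm).1
  rw [← hwd]
  by_contra! hεw
  have hwxy : w ∈ x.1 ∩ y.1 := by
    rcases hw with hwx | hwy
    · exact ⟨hwx, (hxy w hεw).mpr hwx⟩
    · exact ⟨(hxy w hεw).mp hwy, hwy⟩
  exact hmw.lt.not_ge (hm.2 hwxy)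

theorem isBallOpen_up (hn : IsTreeNorm t n) (hd : IsCanonDist t n d) {v : t.T}
    (hv : t.h v ≠ ⊥) : IsBallOpen d (t.up v) := fun _ hx =>
  ⟨n v, hn.pos hv, fun _ hy => by_contra fun hvy =>
    (hd.norm_le_of_mem_of_notMem hn hx hvy).not_gt hy⟩

theorem isBallOpen_compl_up (hn : IsTreeNorm t n) (hd : IsCanonDist t n d) (w : t.T) :
    IsBallOpen d (t.up w)ᶜ := by
  intro x hwx
  obtain ⟨p, hpx, u, hux, hpu, huw⟩ := x.exists_covBy_notMem hwx
  obtain ⟨c, hcx, hpc⟩ := x.exists_covBy_mem hpx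
  refine ⟨max (n c) (n u), hn.max_pos_of_covBy hpc hpu (ne_of_mem_of_not_mem hcx hux),
    fun y (hy : d x y < _) hwy => hy.not_ge (max_le ?_ ?_)⟩
  all_goals have huy : u ∈ y.1 := y.mem_of_le huw hwy
  · exact hd.norm_le_of_mem_of_notMem hn hcx fun hcy =>
      hux (y.covBy_unique hcy huy hpc hpu ▸ hcx)
  · exact hd.symm x y ▸ hd.norm_le_of_mem_of_notMem hn huy hux

end IsCanonDist

end Norm

/-- The canonical ultrametric on the boundary of a normed height tree generates the
canonical topology: a set is open in the canonical topology iff it is open in the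
metric topology of `d`. -/
theorem stmt19 (t : HeightTree) (n : t.T → ℝ) (hn : IsTreeNorm t n)
    (d : t.Branch → t.Branch → ℝ) (hd : IsCanonDist t n d) :
    ∀ S : Set t.Branch,
      @IsOpen t.Branch t.canonTop S ↔ ∀ x ∈ S, ∃ ε > 0, {y : t.Branch | d x y < ε} ⊆ S := by
  intro S
  constructor
  · refine TopologicalSpace.GenerateOpen.isBallOpen ?_
    rintro s (⟨v, hv, rfl⟩ | ⟨w, rfl⟩)
    · exact hd.isBallOpen_up hn hv
    · exact hd.isBallOpen_compl_up hn w
  · intro hS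
    let := t.canonTop
    refine isOpen_iff_forall_mem_open.mpr fun x hx => ?_
    obtain ⟨ε, hε, hball⟩ := hS x hx
    refine ⟨{y | ∀ z ∈ {z | ε ≤ n z}, z ∈ y.1 ↔ z ∈ x.1},
      fun y hy => hball (hd.lt_of_forall_mem_iff hε hy), ?_, fun _ _ => Iff.rfl⟩
    exact isOpen_setOf_forall_mem_iff (hn.finite ε hε)
      (fun z hz => hn.h_ne_bot (hε.trans_le hz)) x
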